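/- Let ν ∈ [0,1), c₁ ≥ 0, c₂ ≥ 0 and let V : ℝ³ → ℝ be measurable with −ν/|x| − c₁ ≤ V(x) ≤ c₂ for a.e. x. Let λ > c₂ − 1 and φ ∈ C_c^∞(ℝ³, ℂ²). Then for every χ ∈ L²(ℝ³, ℂ²), t_V(φ,χ) − λ(‖φ‖²_{L²} + ‖χ‖²_{L²}) ≤ ∫_{ℝ³} [ |((σ·∇)φ)(x)|²/(1 − V(x) + λ) + (1 + V(x) − λ)|φ(x)|² ] dx, with equality if and only if χ(x) = −i((σ·∇)φ)(x)/(1 − V(x) + λ) for a.e. x ∈ ℝ³. -/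

import Mathlib

open MeasureTheory Complex

set_option maxHeartbeats 1000000

noncomputable section

abbrev R3 := EuclideanSpace ℝ (Fin 3)
abbrev C2 := EuclideanSpace ℂ (Fin 2)

/-- The `k`-th partial derivative of `φ : ℝ³ → ℂ²`. -/
noncomputable def pd (φ : R3 → C2) (k : Fin 3) (x : R3) : C2 :=
  fderiv ℝ φ x (EuclideanSpace.single k 1)

/-- `(σ·∇)φ = σ₁∂₁φ + σ₂∂₂φ + σ₃∂₃φ` with the Pauli matrices
`σ₁ = [[0,1],[1,0]]`, `σ₂ = [[0,-i],[i,0]]`, `σ₃ = [[1,0],[0,-1]]`. -/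
noncomputable def sigmaGrad (φ : R3 → C2) (x : R3) : C2 :=
  (WithLp.equiv 2 (Fin 2 → ℂ)).symm
    ![pd φ 0 x 1 - Complex.I * pd φ 1 x 1 + pd φ 2 x 0,
      pd φ 0 x 0 + Complex.I * pd φ 1 x 0 - pd φ 2 x 1]

/-- `φ ∈ C_c^∞(ℝ³, ℂ²)`. -/
def IsCc (φ : R3 → C2) : Prop := ContDiff ℝ (⊤ : ℕ∞) φ ∧ HasCompactSupport φ


/-- Integrable part of `t_V(φ,χ) - λ(‖φ‖² + ‖χ‖²)`. -/
noncomputable def tVlamA (V : R3 → ℝ) (lam : ℝ) (φ χ : R3 → C2) : ℝ :=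
  ∫ x : R3, (2 * (inner ℂ (-(Complex.I) • sigmaGrad φ x) (χ x) : ℂ).re
      + (1 + V x - lam) * ‖φ x‖ ^ 2)

/-- Possibly infinite negative part of `t_V(φ,χ) - λ(‖φ‖² + ‖χ‖²)`:
`∫ (1 + λ - V)|χ|²` where `1 + λ - V > 0` a.e. -/
noncomputable def tVlamB (V : R3 → ℝ) (lam : ℝ) (χ : R3 → C2) : ENNReal :=
  ∫⁻ x : R3, ENNReal.ofReal ((1 + lam - V x) * ‖χ x‖ ^ 2)

/-! ### Auxiliary lemmas -/

lemma pd_continuous {φ : R3 → C2} (hφ : IsCc φ) (k : Fin 3) : Continuous (pd φ k) :=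
  (hφ.1.continuous_fderiv (by simp)).clm_apply continuous_const

lemma pd_coord_continuous {φ : R3 → C2} (hφ : IsCc φ) (k : Fin 3) (i : Fin 2) :
    Continuous (fun x => pd φ k x i) :=
  (continuous_apply i).comp ((PiLp.continuous_ofLp 2 (fun _ : Fin 2 => ℂ)).comp
    (pd_continuous hφ k))

lemma sigmaGrad_continuous {φ : R3 → C2} (hφ : IsCc φ) : Continuous (sigmaGrad φ) := by
  apply (PiLp.continuous_toLp 2 (fun _ : Fin 2 => ℂ)).comp
  apply continuous_pi
  intro i
  fin_cases i
  · exact ((pd_coord_continuous hφ 0 1).sub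
      (continuous_const.mul (pd_coord_continuous hφ 1 1))).add (pd_coord_continuous hφ 2 0)
  · exact ((pd_coord_continuous hφ 0 0).add
      (continuous_const.mul (pd_coord_continuous hφ 1 0))).sub (pd_coord_continuous hφ 2 1)

lemma sigmaGrad_support {φ : R3 → C2} :
    HasCompactSupport φ → HasCompactSupport (sigmaGrad φ) := by
  intro h
  apply (h.fderiv ℝ).mono'
  intro x hx
  by_contra hmem
  have h0 : fderiv ℝ φ x = 0 := image_eq_zero_of_notMem_tsupport hmem
  have hpd : ∀ k : Fin 3, pd φ k x = 0 := by intro k; simp [pd, h0]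
  apply hx
  have hz : sigmaGrad φ x = 0 := by
    simp only [sigmaGrad, hpd]
    have h1 : (0 : C2) 1 = 0 := rfl
    have h0' : (0 : C2) 0 = 0 := rfl
    rw [h1, h0']
    have hv : ![(0 : ℂ) - Complex.I * 0 + 0, 0 + Complex.I * 0 - 0] = (0 : Fin 2 → ℂ) := by
      funext i; fin_cases i <;> simp
    rw [hv]
    rfl
  exact hz

lemma key_ptwise (w : ℝ) (hw : 0 < w) (u v : C2) :
    ‖u‖^2 / w + w * ‖v‖^2 - 2 * (inner ℂ u v : ℂ).re
      = w * ‖v - (((1:ℝ)/w : ℝ):ℂ) • u‖^2 := by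
  have h := norm_sub_sq (𝕜 := ℂ) v ((((1:ℝ)/w : ℝ):ℂ) • u)
  have h1 : (inner ℂ v ((((1:ℝ)/w : ℝ):ℂ) • u) : ℂ) = (((1:ℝ)/w : ℝ):ℂ) * inner ℂ v u :=
    inner_smul_right _ _ _
  have h2 : RCLike.re (inner ℂ v ((((1:ℝ)/w : ℝ):ℂ) • u) : ℂ) = ((1:ℝ)/w) * (inner ℂ v u : ℂ).re := by
    rw [h1]; simp
  have h3 : (inner ℂ v u : ℂ).re = (inner ℂ u v : ℂ).re := by
    exact inner_re_symm (𝕜 := ℂ) v u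
  have h4 : ‖(((1:ℝ)/w : ℝ):ℂ) • u‖^2 = ((1:ℝ)/w)^2 * ‖u‖^2 := by
    rw [norm_smul, mul_pow, Complex.norm_real, Real.norm_eq_abs, _root_.sq_abs]
  rw [h] at *
  rw [h2, h3, h4]
  field_simp
  ring

lemma coord_abs_le_norm (x : R3) (i : Fin 3) : |x i| ≤ ‖x‖ := by
  rw [EuclideanSpace.norm_eq, ← Real.sqrt_sq_eq_abs]
  apply Real.sqrt_le_sqrt
  calc (x i)^2 = ‖x i‖^2 := by rw [Real.norm_eq_abs, _root_.sq_abs]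
  _ ≤ ∑ j, ‖x j‖^2 := Finset.single_le_sum (fun j _ => sq_nonneg ‖x j‖) (Finset.mem_univ i)

lemma integrable_F {R : ℝ} (hR : 0 < R) :
    Integrable ((Set.Ioc (-R) R).indicator (fun t : ℝ => |t| ^ (-(1/3) : ℝ))) := by
  rw [integrable_indicator_iff measurableSet_Ioc]
  have hpos : IntegrableOn (fun t : ℝ => |t| ^ (-(1/3) : ℝ)) (Set.Ioc 0 R) := by
    have h := (intervalIntegral.intervalIntegrable_rpow' (a := 0) (b := R) (r := -(1/3))
      (by norm_num))
    rw [intervalIntegrable_iff, Set.uIoc_of_le hR.le] at h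
    exact h.congr_fun (fun t ht => by rw [abs_of_pos ht.1]) measurableSet_Ioc
  have m : MeasurableEmbedding (Neg.neg : ℝ → ℝ) := (Homeomorph.neg ℝ).measurableEmbedding
  have hneg : IntegrableOn (fun t : ℝ => |t| ^ (-(1/3) : ℝ)) (Set.Ioc (-R) 0) := by
    have hIco : IntegrableOn (fun t : ℝ => |t| ^ (-(1/3) : ℝ)) (Set.Ico 0 R) :=
      hpos.congr_set_ae Ico_ae_eq_Ioc
    rw [← Measure.map_neg_eq_self (volume : Measure ℝ), m.integrableOn_map_iff]
    have hpre : (Neg.neg : ℝ → ℝ) ⁻¹' (Set.Ioc (-R) 0) = Set.Ico 0 R := by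
      ext t
      simp only [Set.mem_preimage, Set.mem_Ioc, Set.mem_Ico]
      constructor <;> intro h <;> constructor <;> linarith [h.1, h.2]
    rw [hpre]
    exact hIco.congr_fun (fun t ht => by simp [Function.comp, abs_neg]) measurableSet_Ico
  have hunion : Set.Ioc (-R) R = Set.Ioc (-R) 0 ∪ Set.Ioc 0 R :=
    (Set.Ioc_union_Ioc_eq_Ioc (by linarith) hR.le).symm
  rw [hunion]; exact hneg.union hpos

lemma integrableOn_inv_norm_ball (R : ℝ) :
    IntegrableOn (fun x : R3 => ‖x‖⁻¹) (Metric.ball 0 R) := by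
  rcases le_or_gt R 0 with hR | hR
  · rw [Metric.ball_eq_empty.2 hR]; exact integrableOn_empty
  set F : ℝ → ℝ := (Set.Ioc (-R) R).indicator (fun t : ℝ => |t| ^ (-(1/3) : ℝ)) with hF
  have hFnn : ∀ t, 0 ≤ F t :=
    fun t => Set.indicator_nonneg (fun s _ => Real.rpow_nonneg (abs_nonneg s) _) t
  have hFint : Integrable F := integrable_F hR
  have hG : Integrable (fun y : Fin 3 → ℝ => ∏ i, F (y i)) :=
    Integrable.fintype_prod (fun _ => hFint)
  have hmp := EuclideanSpace.volume_preserving_symm_measurableEquiv_toLp (Fin 3)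
  have hG' : Integrable (fun x : R3 => ∏ i, F (x i)) :=
    (hmp.integrable_comp_emb (MeasurableEquiv.toLp 2 (Fin 3 → ℝ)).symm.measurableEmbedding).2 hG
  have hae : ∀ᵐ x : R3, ∀ i : Fin 3, x i ≠ 0 := by
    rw [ae_all_iff]
    intro i
    have hSm : MeasurableSet {y : Fin 3 → ℝ | y i = 0} :=
      (measurable_pi_apply i) (measurableSet_singleton 0)
    have hN : volume {y : Fin 3 → ℝ | y i = 0} = 0 := by
      have h := Measure.ae_eval_ne (fun _ : Fin 3 => (volume : Measure ℝ)) i 0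
      rw [← volume_pi] at h
      simpa [ae_iff] using h
    rw [ae_iff]
    have hset : {x : R3 | ¬ x i ≠ 0} =
        ⇑(MeasurableEquiv.toLp 2 (Fin 3 → ℝ)).symm ⁻¹' {y : Fin 3 → ℝ | y i = 0} := by
      ext x; simp
    rw [hset, hmp.measure_preimage hSm.nullMeasurableSet, hN]
  rw [← integrable_indicator_iff measurableSet_ball]
  apply hG'.mono'
  · exact ((continuous_norm.measurable.inv).aestronglyMeasurable).indicator
      measurableSet_ball
  · filter_upwards [hae] with x hx
    by_cases hxball : x ∈ Metric.ball (0 : R3) R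
    · rw [Set.indicator_of_mem hxball]
      have hxnorm : ‖x‖ < R := by simpa [mem_ball_zero_iff] using hxball
      have hx0 : x ≠ 0 := by
        intro h
        exact hx 0 (by rw [h]; rfl)
      have hnormpos : (0:ℝ) < ‖x‖ := norm_pos_iff.2 hx0
      rw [Real.norm_eq_abs, _root_.abs_of_nonneg (inv_nonneg.2 (norm_nonneg x))]
      have hcoord : ∀ i : Fin 3, F (x i) = |x i| ^ (-(1/3) : ℝ) := by
        intro i
        apply Set.indicator_of_mem
        have h2 := (coord_abs_le_norm x i).trans_lt hxnorm
        rw [abs_lt] at h2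
        exact ⟨h2.1, h2.2.le⟩
      rw [Finset.prod_congr rfl (fun i _ => hcoord i)]
      have hrw : ∀ i : Fin 3, |x i| ^ (-(1/3) : ℝ) = (|x i| ^ ((1:ℝ)/3))⁻¹ := by
        intro i; rw [Real.rpow_neg (abs_nonneg _)]
      rw [Finset.prod_congr rfl (fun i _ => hrw i), Finset.prod_inv_distrib]
      have habs : ∀ i : Fin 3, (0:ℝ) < |x i| := fun i => abs_pos.2 (hx i)
      apply inv_anti₀
      · exact Finset.prod_pos (fun i _ => Real.rpow_pos_of_pos (habs i) _)
      · calc ∏ i : Fin 3, |x i| ^ ((1:ℝ)/3) ≤ ∏ i : Fin 3, ‖x‖ ^ ((1:ℝ)/3) :=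
            Finset.prod_le_prod (fun i _ => by positivity)
              (fun i _ => Real.rpow_le_rpow (abs_nonneg _) (coord_abs_le_norm x i) (by norm_num))
        _ = ‖x‖ := by
            rw [Finset.prod_const, Finset.card_univ, Fintype.card_fin,
              ← Real.rpow_natCast (‖x‖ ^ ((1:ℝ)/3)) 3, ← Real.rpow_mul (norm_nonneg x)]
            norm_num
    · rw [Set.indicator_of_notMem hxball]
      simpa using Finset.prod_nonneg (fun i _ => hFnn (x i))

/-- For `λ > c₂ - 1` the quantity `t_V(φ,χ) - λ(‖φ‖² + ‖χ‖²) ∈ [-∞,+∞)` (written as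
the integral of its integrable part minus the lower integral of its negative part)
is at most `Q_λ(φ) = ∫ (|σ·∇φ|²/(1-V+λ) + (1+V-λ)|φ|²)`, with equality if and only if
`χ = -i(σ·∇)φ/(1-V+λ)` a.e. -/
theorem sup_over_lower_component (ν c₁ c₂ : ℝ) (hν : ν ∈ Set.Ico (0 : ℝ) 1)
    (hc₁ : 0 ≤ c₁) (hc₂ : 0 ≤ c₂) (V : R3 → ℝ) (hVmeas : Measurable V)
    (hV : ∀ᵐ x ∂(volume : Measure R3), -ν / ‖x‖ - c₁ ≤ V x ∧ V x ≤ c₂)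
    (lam : ℝ) (hlam : c₂ - 1 < lam) (φ : R3 → C2) (hφ : IsCc φ)
    (χ : R3 → C2) (hχ : MemLp χ 2 (volume : Measure R3)) :
    ((tVlamA V lam φ χ : EReal) - (tVlamB V lam χ : EReal)
      ≤ ((∫ x : R3, (‖sigmaGrad φ x‖ ^ 2 / (1 - V x + lam)
          + (1 + V x - lam) * ‖φ x‖ ^ 2) : ℝ) : EReal))
    ∧ ((tVlamA V lam φ χ : EReal) - (tVlamB V lam χ : EReal)
        = ((∫ x : R3, (‖sigmaGrad φ x‖ ^ 2 / (1 - V x + lam)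
            + (1 + V x - lam) * ‖φ x‖ ^ 2) : ℝ) : EReal)
      ↔ ∀ᵐ x ∂(volume : Measure R3),
          χ x = (((1 : ℝ) / (1 - V x + lam) : ℝ) : ℂ) •
            (-(Complex.I) • sigmaGrad φ x)) := by
  have hφcont : Continuous φ := hφ.1.continuous
  have hφsupp : HasCompactSupport φ := hφ.2
  have hsgcont : Continuous (sigmaGrad φ) := sigmaGrad_continuous hφ
  have hsgsupp : HasCompactSupport (sigmaGrad φ) := sigmaGrad_support hφ.2
  set sg : R3 → C2 := sigmaGrad φ with hsgdef
  set g : R3 → C2 := fun x => -(Complex.I) • sg x with hgdef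
  have hgcont : Continuous g := by rw [hgdef]; exact hsgcont.const_smul (-(Complex.I))
  have hnormg : ∀ x, ‖g x‖ = ‖sg x‖ := by
    intro x
    rw [hgdef]
    simp [norm_smul]
  set ε : ℝ := 1 + lam - c₂ with hεdef
  have hεpos : 0 < ε := by rw [hεdef]; linarith
  -- integrability facts
  have hsg2 : Integrable (fun x : R3 => ‖sg x‖^2) := by
    apply Continuous.integrable_of_hasCompactSupport (hsgcont.norm.pow 2)
    apply hsgsupp.mono'
    intro x hx
    apply subset_tsupport sg
    simp only [Function.mem_support, ne_eq] at hx ⊢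
    intro h0
    exact hx (by simp [h0])
  have hφ2 : Integrable (fun x : R3 => ‖φ x‖^2) := by
    apply Continuous.integrable_of_hasCompactSupport (hφcont.norm.pow 2)
    apply hφsupp.mono'
    intro x hx
    apply subset_tsupport φ
    simp only [Function.mem_support, ne_eq] at hx ⊢
    intro h0
    exact hx (by simp [h0])
  have hχ2 : Integrable (fun x : R3 => ‖χ x‖^2) := by
    have h := hχ.integrable_norm_rpow (by norm_num) (by norm_num)
    simp only [ENNReal.toReal_ofNat] at h
    exact h.congr (Filter.Eventually.of_forall (fun x => by
      norm_num [show ((2:ℝ)) = ((2:ℕ):ℝ) by norm_num, Real.rpow_natCast]))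
  -- bound on φ and its support
  obtain ⟨R, hR0, hRsub⟩ := hφsupp.isBounded.subset_ball_lt 0 0
  obtain ⟨C, hC⟩ := hφsupp.exists_bound_of_continuous hφcont
  have hVφ2 : Integrable (fun x : R3 => (1 + V x - lam) * ‖φ x‖ ^ 2) := by
    have hind : Integrable ((Metric.ball (0:R3) R).indicator (fun y : R3 => ‖y‖⁻¹)) :=
      (integrable_indicator_iff measurableSet_ball).2 (integrableOn_inv_norm_ball R)
    apply Integrable.mono'
      (g := fun x : R3 =>
        (|1 - lam| + (c₁ + c₂)) * ‖φ x‖^2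
          + (ν * C^2) * (Metric.ball (0:R3) R).indicator (fun y : R3 => ‖y‖⁻¹) x)
      ((hφ2.const_mul _).add (hind.const_mul _))
    · exact (((measurable_const.add hVmeas).sub measurable_const).aestronglyMeasurable).mul
        ((hφcont.norm.pow 2).measurable.aestronglyMeasurable)
    · filter_upwards [hV] with x hx
      have hindnn : 0 ≤ (Metric.ball (0:R3) R).indicator (fun y : R3 => ‖y‖⁻¹) x :=
        Set.indicator_nonneg (fun y _ => inv_nonneg.2 (norm_nonneg y)) x
      by_cases hxs : φ x = 0
      · have hz : ‖(1 + V x - lam) * ‖φ x‖ ^ 2‖ = 0 := by rw [hxs]; simp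
        rw [hz]
        have h4 : (0:ℝ) ≤ (|1 - lam| + (c₁ + c₂)) * ‖φ x‖^2 := by positivity
        have h3 : (0:ℝ) ≤ ν * C^2 * (Metric.ball (0:R3) R).indicator (fun y : R3 => ‖y‖⁻¹) x :=
          mul_nonneg (mul_nonneg hν.1 (sq_nonneg C)) hindnn
        linarith
      · have hxball : x ∈ Metric.ball (0:R3) R := hRsub (subset_tsupport φ hxs)
        rw [Set.indicator_of_mem hxball]
        have hx1' : -(ν * ‖x‖⁻¹) - c₁ ≤ V x := by
          rw [← div_eq_mul_inv, ← neg_div]; exact hx.1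
        have hCx : ‖φ x‖^2 ≤ C^2 := by
          have := hC x
          nlinarith [norm_nonneg (φ x)]
        have hinvnn : (0:ℝ) ≤ ‖x‖⁻¹ := inv_nonneg.2 (norm_nonneg x)
        have habs2 : |1 + V x - lam| ≤ |1 - lam| + (c₁ + c₂) + ν * ‖x‖⁻¹ := by
          have h1 : -|1 - lam| ≤ 1 - lam := neg_abs_le _
          have h2 : 1 - lam ≤ |1 - lam| := le_abs_self _
          have h3 : 0 ≤ ν * ‖x‖⁻¹ := mul_nonneg hν.1 hinvnn
          rw [abs_le]
          constructor <;> linarith [hx.2]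
        rw [norm_mul, Real.norm_eq_abs, Real.norm_eq_abs (‖φ x‖^2),
          _root_.abs_of_nonneg (sq_nonneg ‖φ x‖)]
        have hstep : |1 + V x - lam| * ‖φ x‖^2
            ≤ (|1 - lam| + (c₁ + c₂) + ν * ‖x‖⁻¹) * ‖φ x‖^2 :=
          mul_le_mul_of_nonneg_right habs2 (sq_nonneg _)
        have hstep2 : (ν * ‖x‖⁻¹) * ‖φ x‖^2 ≤ (ν * C^2) * ‖x‖⁻¹ := by
          calc (ν * ‖x‖⁻¹) * ‖φ x‖^2 ≤ (ν * ‖x‖⁻¹) * C^2 :=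
              mul_le_mul_of_nonneg_left hCx (mul_nonneg hν.1 hinvnn)
          _ = (ν * C^2) * ‖x‖⁻¹ := by ring
        have hr : (|1 - lam| + (c₁ + c₂) + ν * ‖x‖⁻¹) * ‖φ x‖^2
            = (|1 - lam| + (c₁ + c₂)) * ‖φ x‖^2 + (ν * ‖x‖⁻¹) * ‖φ x‖^2 := by ring
        linarith
  -- inner ℂ product term is integrable
  have hg2 : Integrable (fun x : R3 => ‖g x‖^2) := by
    apply hsg2.congr
    apply Filter.Eventually.of_forall
    intro x
    show ‖sg x‖ ^ 2 = ‖g x‖ ^ 2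
    rw [hnormg x]
  have hinner : Integrable (fun x : R3 => 2 * (inner ℂ (g x) (χ x) : ℂ).re) := by
    apply Integrable.mono' (g := fun x : R3 => ‖g x‖^2 + ‖χ x‖^2) (hg2.add hχ2)
    · exact ((Complex.continuous_re.comp_aestronglyMeasurable
        (hgcont.aestronglyMeasurable.inner hχ.aestronglyMeasurable)).const_mul 2)
    · apply Filter.Eventually.of_forall
      intro x
      have h1 : |(inner ℂ (g x) (χ x) : ℂ).re| ≤ ‖g x‖ * ‖χ x‖ := by
        calc |(inner ℂ (g x) (χ x) : ℂ).re| ≤ ‖(inner ℂ (g x) (χ x) : ℂ)‖ := by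
              exact Complex.abs_re_le_norm _
        _ ≤ ‖g x‖ * ‖χ x‖ := norm_inner_le_norm _ _
      rw [Real.norm_eq_abs, abs_mul]
      have h2 : |(2:ℝ)| = 2 := by norm_num
      rw [h2]
      have := abs_nonneg ((inner ℂ (g x) (χ x) : ℂ).re)
      nlinarith [sq_nonneg (‖g x‖ - ‖χ x‖)]
  -- first part of Q is integrable
  have hq1 : Integrable (fun x : R3 => ‖sg x‖^2 / (1 - V x + lam)) := by
    apply Integrable.mono' (g := fun x : R3 => ‖sg x‖^2 / ε) (hsg2.div_const ε)
    · exact ((hsgcont.norm.pow 2).measurable.div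
        ((measurable_const.sub hVmeas).add measurable_const)).aestronglyMeasurable
    · filter_upwards [hV] with x hx
      have hw : ε ≤ 1 - V x + lam := by rw [hεdef]; linarith [hx.2]
      have hwpos : 0 < 1 - V x + lam := lt_of_lt_of_le hεpos hw
      rw [Real.norm_eq_abs, _root_.abs_of_nonneg (div_nonneg (sq_nonneg _) hwpos.le)]
      exact div_le_div_of_nonneg_left (sq_nonneg _) hεpos hw
  have hqint : Integrable (fun x : R3 =>
      ‖sg x‖^2 / (1 - V x + lam) + (1 + V x - lam) * ‖φ x‖ ^ 2) := hq1.add hVφ2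
  -- the "a" integrand (of tVlamA)
  set a : R3 → ℝ := fun x => 2 * (inner ℂ (g x) (χ x) : ℂ).re + (1 + V x - lam) * ‖φ x‖ ^ 2
    with hadef
  have haint : Integrable a := hinner.add hVφ2
  -- f₂ integrand (of tVlamB)
  set f₂ : R3 → ℝ := fun x => (1 + lam - V x) * ‖χ x‖ ^ 2 with hf₂def
  have hf₂meas : AEStronglyMeasurable f₂ (volume : Measure R3) :=
    ((measurable_const.sub hVmeas).aestronglyMeasurable).mul
      ((hχ.aestronglyMeasurable.norm).pow 2)
  have hf₂nonneg : 0 ≤ᵐ[(volume : Measure R3)] f₂ := by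
    filter_upwards [hV] with x hx
    have : (0:ℝ) ≤ 1 + lam - V x := by linarith [hx.2]
    exact mul_nonneg this (sq_nonneg _)
  -- pointwise key identity, a.e.
  have hDkey : ∀ᵐ x ∂(volume : Measure R3),
      (‖sg x‖^2 / (1 - V x + lam) + (1 + V x - lam) * ‖φ x‖ ^ 2) + f₂ x - a x
        = (1 - V x + lam)
            * ‖χ x - (((1 : ℝ) / (1 - V x + lam) : ℝ) : ℂ) • g x‖^2 := by
    filter_upwards [hV] with x hx
    have hwpos : 0 < 1 - V x + lam := by linarith [hx.2]
    have hkey := key_ptwise (1 - V x + lam) hwpos (g x) (χ x)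
    rw [hf₂def, hadef]
    simp only
    rw [← hkey, hnormg x]
    ring
  by_cases hB : tVlamB V lam χ = ⊤
  · -- the left-hand side is ⊥
    have hLHS : (tVlamA V lam φ χ : EReal) - (tVlamB V lam χ : EReal) = ⊥ := by
      rw [hB]
      simp [EReal.coe_ennreal_top, sub_eq_add_neg]
    constructor
    · rw [hLHS]; exact bot_le
    · rw [hLHS]
      constructor
      · intro h
        exact absurd h.symm (EReal.coe_ne_bot _)
      · intro h
        exfalso
        have hle : tVlamB V lam χ ≤ ∫⁻ x : R3, ENNReal.ofReal (‖sg x‖^2 / ε) := by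
          apply lintegral_mono_ae
          filter_upwards [hV, h] with x hx hχx
          apply ENNReal.ofReal_le_ofReal
          have hw : ε ≤ 1 - V x + lam := by rw [hεdef]; linarith [hx.2]
          have hwpos : 0 < 1 - V x + lam := lt_of_lt_of_le hεpos hw
          rw [hχx]
          have h4 : ‖(((1 : ℝ) / (1 - V x + lam) : ℝ) : ℂ) • (-(Complex.I) • sg x)‖^2
              = ((1:ℝ)/(1 - V x + lam))^2 * ‖sg x‖^2 := by
            rw [norm_smul, mul_pow, Complex.norm_real, Real.norm_eq_abs, _root_.sq_abs]
            have : ‖-(Complex.I) • sg x‖ = ‖sg x‖ := by simp [norm_smul]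
            rw [this]
          rw [h4]
          have heq : (1 + lam - V x) * (((1:ℝ)/(1 - V x + lam))^2 * ‖sg x‖^2)
              = ‖sg x‖^2 / (1 - V x + lam) := by
            field_simp
            ring
          rw [heq]
          exact div_le_div_of_nonneg_left (sq_nonneg _) hεpos hw
        exact (hle.trans_lt (hsg2.div_const ε).lintegral_lt_top).ne hB
  · -- tVlamB is finite
    have hf₂int : Integrable f₂ := by
      refine ⟨hf₂meas, ?_⟩
      rw [hasFiniteIntegral_iff_ofReal hf₂nonneg]
      exact lt_of_le_of_ne le_top hB
    have hf₂eq : ∫ x : R3, f₂ x = (tVlamB V lam χ).toReal :=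
      integral_eq_lintegral_of_nonneg_ae hf₂nonneg hf₂meas
    -- D := q + f₂ - a is integrable and nonneg
    set D : R3 → ℝ := fun x =>
      (‖sg x‖^2 / (1 - V x + lam) + (1 + V x - lam) * ‖φ x‖ ^ 2) + f₂ x - a x with hDdef
    have hDint : Integrable D := (hqint.add hf₂int).sub haint
    have hDnonneg : 0 ≤ᵐ[(volume : Measure R3)] D := by
      filter_upwards [hDkey, hV] with x hk hx
      rw [hDdef]
      simp only
      rw [hk]
      have hwpos : 0 < 1 - V x + lam := by linarith [hx.2]
      exact mul_nonneg hwpos.le (sq_nonneg _)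
    have hintD : ∫ x : R3, D x
        = (∫ x : R3, (‖sg x‖^2 / (1 - V x + lam) + (1 + V x - lam) * ‖φ x‖ ^ 2))
          + (∫ x : R3, f₂ x) - ∫ x : R3, a x := by
      have hsum : Integrable (fun x : R3 =>
          (‖sg x‖^2 / (1 - V x + lam) + (1 + V x - lam) * ‖φ x‖ ^ 2) + f₂ x) :=
        hqint.add hf₂int
      rw [hDdef]
      simp only
      rw [integral_sub hsum haint, integral_add hqint hf₂int]
    -- rewrite the EReal LHS as a real number
    have hBcoe : ((tVlamB V lam χ : EReal)) = (((tVlamB V lam χ).toReal : ℝ) : EReal) := by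
      rw [← EReal.coe_toReal (x := (tVlamB V lam χ : EReal)) (by simpa using hB) (by simp)]
      rw [EReal.toReal_coe_ennreal]
    have hAeq : tVlamA V lam φ χ = ∫ x : R3, a x := rfl
    have hLHS : (tVlamA V lam φ χ : EReal) - (tVlamB V lam χ : EReal)
        = (((∫ x : R3, a x) - ∫ x : R3, f₂ x : ℝ) : EReal) := by
      rw [hBcoe, ← hf₂eq, hAeq, ← EReal.coe_sub]
    have hDnn : 0 ≤ ∫ x : R3, D x := integral_nonneg_of_ae hDnonneg
    constructor
    · rw [hLHS, EReal.coe_le_coe_iff]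
      linarith [hintD, hDnn]
    · rw [hLHS, EReal.coe_eq_coe_iff]
      constructor
      · intro h
        have hD0 : ∫ x : R3, D x = 0 := by linarith
        have hDae : D =ᵐ[(volume : Measure R3)] 0 :=
          (integral_eq_zero_iff_of_nonneg_ae hDnonneg hDint).1 hD0
        filter_upwards [hDae, hDkey, hV] with x h0 hk hx
        have hwpos : 0 < 1 - V x + lam := by linarith [hx.2]
        have : (1 - V x + lam)
            * ‖χ x - (((1 : ℝ) / (1 - V x + lam) : ℝ) : ℂ) • g x‖^2 = 0 := by
          rw [← hk]
          simpa [hDdef] using h0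
        have hnz : ‖χ x - (((1 : ℝ) / (1 - V x + lam) : ℝ) : ℂ) • g x‖^2 = 0 := by
          rcases mul_eq_zero.1 this with h | h
          · exact absurd h hwpos.ne'
          · exact h
        have := norm_eq_zero.1 (pow_eq_zero_iff (n := 2) (by norm_num) |>.1 hnz)
        have hsub := sub_eq_zero.1 this
        exact hsub
      · intro h
        have hD0 : ∫ x : R3, D x = 0 := by
          have hDae : D =ᵐ[(volume : Measure R3)] 0 := by
            filter_upwards [h, hDkey, hV] with x hχx hk hx
            rw [hDdef]
            simp only
            rw [hk, hχx]
            have h0g : (-(Complex.I) • sg x) = g x := rfl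
            rw [h0g, sub_self, norm_zero]
            simp
          rw [integral_congr_ae hDae]
          simp
        linarith [hintD, hD0]
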